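/- The automorphism group of the intersection lattice of the generic 13-hyperplane arrangement 𝒜_t is isomorphic to (ℤ/3ℤ) ⋊ S_3, a group of order 18. Equivalently, the group of permutations of the 13 hyperplane labels preserving the incidence structure given by the 13 listed lines-per-hyperplane sets has order 18 and this semidirect product structure. -/

import Mathlib

open scoped Classical

noncomputable section

/-- The incidence data of the intersection lattice of the generic 13-hyperplane
arrangement: the set of (0-indexed) lines lying on each of the 13 hyperplanes. -/
def lineSets : Fin 13 → Finset (Fin 30) :=
  ![{0, 1, 2, 3, 4, 5}, {0, 6, 7, 8, 9, 10}, {1, 6, 11, 12, 13, 14},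
    {1, 7, 15, 16, 17, 18}, {2, 6, 15, 19, 20, 21}, {2, 7, 11, 22, 23, 24},
    {1, 8, 19, 22, 25, 26}, {3, 6, 16, 23, 25, 27}, {3, 8, 11, 17, 20, 28},
    {4, 9, 11, 16, 19, 29}, {3, 7, 12, 21, 26, 29}, {5, 7, 13, 19, 27, 28},
    {3, 10, 14, 18, 19, 24}]

/-- The automorphism group of the intersection lattice: pairs of permutations of the
13 hyperplanes and of the 30 lines preserving incidence. -/
def latAut : Subgroup (Equiv.Perm (Fin 13) × Equiv.Perm (Fin 30)) where
  carrier := {p | ∀ h l, l ∈ lineSets h ↔ p.2 l ∈ lineSets (p.1 h)}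
  one_mem' := by intro h l; simp
  mul_mem' := by
    intro a b ha hb h l
    exact (hb h l).trans (ha (b.1 h) (b.2 l))
  inv_mem' := by
    intro a ha h l
    simpa using (ha (a.1⁻¹ h) (a.2⁻¹ l)).symm

/-!
Every automorphism preserves the number of hyperplanes through a line, hence the degree-weighted
number of lines shared by two hyperplanes (`meetDegree`) and the number of lines of degree 5 on a
hyperplane. For each of the 18 pairs of hyperplanes with the same invariants as `(0, 1)` these
numbers separate the 13 hyperplanes, and a line is determined by the hyperplanes through it, so an
automorphism is determined by the images of the hyperplanes `0` and `1`: there are at most 18.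
Conversely, an explicit automorphism of order 3 and two involutions generating a copy of `S₃`,
whose odd elements invert the first one under conjugation, embed `(ℤ/3) ⋊ S₃`, of order 18.
-/

open Finset

section Incidence

variable {ι κ : Type*}

def IsIncidenceAut (S : ι → Finset κ) (p : Equiv.Perm ι × Equiv.Perm κ) : Prop :=
  ∀ i l, l ∈ S i ↔ p.2 l ∈ S (p.1 i)

instance [Fintype ι] [Fintype κ] [DecidableEq κ] (S : ι → Finset κ) :
    DecidablePred (IsIncidenceAut S) := fun p =>
  inferInstanceAs (Decidable (∀ i l, l ∈ S i ↔ p.2 l ∈ S (p.1 i)))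

theorem IsIncidenceAut.snd_eq_of_fst_eq {S : ι → Finset κ}
    {p q : Equiv.Perm ι × Equiv.Perm κ}
    (hS : ∀ l l', (∀ i, l ∈ S i ↔ l' ∈ S i) → l = l')
    (hp : IsIncidenceAut S p) (hq : IsIncidenceAut S q) (h : p.1 = q.1) : p.2 = q.2 := by
  refine Equiv.ext fun l => hS _ _ fun i => ?_
  have hq' := hq (p.1.symm i) l
  rw [← h, Equiv.apply_symm_apply] at hq'
  rw [← hq', hp (p.1.symm i) l, Equiv.apply_symm_apply]

variable [Fintype ι] [DecidableEq κ] (S : ι → Finset κ)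

def lineDegree (l : κ) : ℕ := #{i | l ∈ S i}

def meetDegree (i j : ι) : ℕ := ∑ l ∈ S i ∩ S j, lineDegree S l

def countLinesOfDegree (d : ℕ) (i : ι) : ℕ := #{l ∈ S i | lineDegree S l = d}

namespace IsIncidenceAut

variable {S} {p q : Equiv.Perm ι × Equiv.Perm κ}

theorem lineDegree_apply (hp : IsIncidenceAut S p) (l : κ) :
    lineDegree S (p.2 l) = lineDegree S l :=
  (card_equiv p.1 fun i => by simp [hp i l]).symm

theorem meetDegree_apply (hp : IsIncidenceAut S p) (i j : ι) :
    meetDegree S (p.1 i) (p.1 j) = meetDegree S i j :=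
  (sum_equiv p.2 (fun l => by simp [hp i l, hp j l])
    fun l _ => (hp.lineDegree_apply l).symm).symm

theorem countLinesOfDegree_apply (hp : IsIncidenceAut S p) (d : ℕ) (i : ι) :
    countLinesOfDegree S d (p.1 i) = countLinesOfDegree S d i :=
  (card_equiv p.2 fun l => by simp [hp i l, hp.lineDegree_apply l]).symm

theorem fst_eq_of_separating (hp : IsIncidenceAut S p) (hq : IsIncidenceAut S q) {a b : ι}
    {d : ℕ} (hsep : Function.Injective fun x =>
      (countLinesOfDegree S d x, meetDegree S x (p.1 a), meetDegree S x (p.1 b)))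
    (ha : p.1 a = q.1 a) (hb : p.1 b = q.1 b) : p.1 = q.1 := by
  refine Equiv.ext fun x => hsep ?_
  simp only [hp.countLinesOfDegree_apply, hp.meetDegree_apply]
  rw [ha, hb, hq.countLinesOfDegree_apply, hq.meetDegree_apply, hq.meetDegree_apply]

end IsIncidenceAut

end Incidence

theorem mem_latAut_iff {p : Equiv.Perm (Fin 13) × Equiv.Perm (Fin 30)} :
    p ∈ latAut ↔ IsIncidenceAut lineSets p :=
  Iff.rfl

theorem lineSets_separating :
    ∀ l l' : Fin 30, (∀ h, l ∈ lineSets h ↔ l' ∈ lineSets h) → l = l' := by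
  decide

def admissiblePairs : Finset (Fin 13 × Fin 13) :=
  {ab | countLinesOfDegree lineSets 5 ab.1 = countLinesOfDegree lineSets 5 0 ∧
    countLinesOfDegree lineSets 5 ab.2 = countLinesOfDegree lineSets 5 1 ∧
    meetDegree lineSets ab.1 ab.2 = meetDegree lineSets 0 1}

theorem card_admissiblePairs : #admissiblePairs = 18 := by
  decide

set_option maxRecDepth 100000 in
theorem injective_of_mem_admissiblePairs : ∀ ab ∈ admissiblePairs, Function.Injective fun x =>
    (countLinesOfDegree lineSets 5 x, meetDegree lineSets x ab.1, meetDegree lineSets x ab.2) := by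
  decide

theorem apply_zero_one_mem_admissiblePairs {p : Equiv.Perm (Fin 13) × Equiv.Perm (Fin 30)}
    (hp : IsIncidenceAut lineSets p) : (p.1 0, p.1 1) ∈ admissiblePairs := by
  simp [admissiblePairs, hp.countLinesOfDegree_apply, hp.meetDegree_apply]

theorem IsIncidenceAut.eq_of_fst_apply_zero_one {p q : Equiv.Perm (Fin 13) × Equiv.Perm (Fin 30)}
    (hp : IsIncidenceAut lineSets p) (hq : IsIncidenceAut lineSets q)
    (h₀ : p.1 0 = q.1 0) (h₁ : p.1 1 = q.1 1) : p = q := by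
  have hfst : p.1 = q.1 := hp.fst_eq_of_separating hq
    (injective_of_mem_admissiblePairs _ (apply_zero_one_mem_admissiblePairs hp)) h₀ h₁
  exact Prod.ext hfst (hp.snd_eq_of_fst_eq lineSets_separating hq hfst)

theorem card_latAut_le : Nat.card latAut ≤ 18 := by
  let f : latAut → admissiblePairs := fun p => ⟨_, apply_zero_one_mem_admissiblePairs p.2⟩
  have hf : Function.Injective f := fun p q hpq => Subtype.ext <|
    IsIncidenceAut.eq_of_fst_apply_zero_one p.2 q.2 (congrArg (·.1.1) hpq) (congrArg (·.1.2) hpq)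
  simpa [Nat.card_eq_finsetCard, card_admissiblePairs] using Nat.card_le_card_of_injective f hf

def rotationAut : Equiv.Perm (Fin 13) × Equiv.Perm (Fin 30) :=
  (⟨![3, 4, 2, 6, 7, 9, 0, 1, 5, 8, 11, 12, 10], ![6, 7, 2, 0, 1, 8, 3, 4, 9, 5, 12, 10, 11],
      by decide, by decide⟩,
    ⟨![15, 1, 16, 7, 17, 18, 6, 19, 2, 20, 21, 11, 13, 14, 12, 25, 8, 22, 26, 3, 23, 27, 4, 9, 29,
        0, 5, 10, 24, 28],
      ![25, 1, 8, 19, 22, 26, 6, 3, 16, 23, 27, 11, 14, 12, 13, 0, 2, 4, 5, 7, 9, 10, 17, 20, 28,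
        15, 18, 21, 29, 24],
      by decide, by decide⟩)

def involution₀₁ : Equiv.Perm (Fin 13) × Equiv.Perm (Fin 30) :=
  (Function.Involutive.toPerm ![0, 9, 2, 6, 5, 4, 3, 8, 7, 1, 12, 11, 10]
      (by unfold Function.Involutive; decide),
    Function.Involutive.toPerm ![4, 1, 2, 3, 0, 5, 11, 19, 16, 9, 29, 6, 14, 13, 12, 22, 8, 25,
      26, 7, 23, 24, 15, 20, 21, 17, 18, 28, 27, 10]
      (by unfold Function.Involutive; decide))

def involution₁₂ : Equiv.Perm (Fin 13) × Equiv.Perm (Fin 30) :=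
  (Function.Involutive.toPerm ![9, 1, 2, 5, 7, 3, 8, 4, 6, 0, 11, 10, 12]
      (by unfold Function.Involutive; decide),
    Function.Involutive.toPerm ![9, 11, 16, 19, 4, 29, 6, 7, 8, 0, 10, 1, 13, 12, 14, 23, 2, 22,
      24, 3, 25, 27, 17, 15, 18, 20, 28, 21, 26, 5]
      (by unfold Function.Involutive; decide))

theorem rotationAut_mem : rotationAut ∈ latAut :=
  mem_latAut_iff.2 (by decide)

theorem involution₀₁_mem : involution₀₁ ∈ latAut :=
  mem_latAut_iff.2 (by decide)

theorem involution₁₂_mem : involution₁₂ ∈ latAut :=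
  mem_latAut_iff.2 (by decide)

def rotationHom : Multiplicative (ZMod 3) →* Equiv.Perm (Fin 13) × Equiv.Perm (Fin 30) where
  toFun x := rotationAut ^ (Multiplicative.toAdd x).val
  map_one' := pow_zero _
  map_mul' := by decide

def permHom : Equiv.Perm (Fin 3) →* Equiv.Perm (Fin 13) × Equiv.Perm (Fin 30) where
  toFun σ :=
    if σ = 1 then 1
    else if σ = Equiv.swap 0 1 then involution₀₁
    else if σ = Equiv.swap 1 2 then involution₁₂
    else if σ = Equiv.swap 0 2 then involution₀₁ * involution₁₂ * involution₀₁
    else if σ = Equiv.swap 0 1 * Equiv.swap 1 2 then involution₀₁ * involution₁₂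
    else involution₁₂ * involution₀₁
  map_one' := if_pos rfl
  map_mul' := by decide

def signAction : Equiv.Perm (Fin 3) →* MulAut (Multiplicative (ZMod 3)) :=
  (MulAutMultiplicative (ZMod 3)).symm.toMonoidHom.comp
    ((DistribMulAction.toAddAut ℤˣ (ZMod 3)).comp Equiv.Perm.sign)

theorem rotationHom_signAction :
    ∀ σ x, rotationHom (signAction σ x) = permHom σ * rotationHom x * (permHom σ)⁻¹ := by
  decide

def semidirectToPerm :
    Multiplicative (ZMod 3) ⋊[signAction] Equiv.Perm (Fin 3) →*
      Equiv.Perm (Fin 13) × Equiv.Perm (Fin 30) :=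
  SemidirectProduct.lift rotationHom permHom fun σ =>
    MonoidHom.ext fun x => rotationHom_signAction σ x

theorem semidirectToPerm_injective : Function.Injective semidirectToPerm := by
  have key : ∀ x σ, rotationHom x * permHom σ = 1 → x = 1 ∧ σ = 1 := by decide
  refine (injective_iff_map_eq_one _).2 fun g hg => ?_
  obtain ⟨hx, hσ⟩ := key g.left g.right hg
  exact SemidirectProduct.ext hx hσ

theorem permHom_mem (σ : Equiv.Perm (Fin 3)) : permHom σ ∈ latAut := by
  have h₀₁ := involution₀₁_mem
  have h₁₂ := involution₁₂_mem
  simp only [permHom, MonoidHom.coe_mk, OneHom.coe_mk]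
  split_ifs <;> apply_rules [one_mem, mul_mem]

def semidirectToLatAut : Multiplicative (ZMod 3) ⋊[signAction] Equiv.Perm (Fin 3) →* latAut :=
  semidirectToPerm.codRestrict latAut fun g =>
    mul_mem (pow_mem rotationAut_mem _) (permHom_mem g.right)

theorem card_semidirectProduct :
    Nat.card (Multiplicative (ZMod 3) ⋊[signAction] Equiv.Perm (Fin 3)) = 18 := by
  simp [SemidirectProduct.card, Nat.card_eq_fintype_card, Fintype.card_perm, Nat.factorial]

/-- The automorphism group of the intersection lattice of the
generic 13-hyperplane arrangement has order 18 and is isomorphic to a semidirect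
product `(ℤ/3ℤ) ⋊ S₃`. -/
theorem stmt16 :
    Nat.card latAut = 18 ∧
    ∃ φ : Equiv.Perm (Fin 3) →* MulAut (Multiplicative (ZMod 3)),
      Nonempty (latAut ≃*
        SemidirectProduct (Multiplicative (ZMod 3)) (Equiv.Perm (Fin 3)) φ) := by
  have hinj : Function.Injective semidirectToLatAut := fun g g' h =>
    semidirectToPerm_injective (congrArg Subtype.val h)
  have hcard : Nat.card latAut = 18 := card_latAut_le.antisymm
    (card_semidirectProduct ▸ Nat.card_le_card_of_injective _ hinj)
  have hbij : Function.Bijective semidirectToLatAut :=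
    (Nat.bijective_iff_injective_and_card _).2 ⟨hinj, card_semidirectProduct.trans hcard.symm⟩
  exact ⟨hcard, signAction, ⟨(MulEquiv.ofBijective _ hbij).symm⟩⟩
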